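/- arXiv:1803.10463 — 4 statements merged into one kernel-verified Lean document; each statement's English description precedes it below -/
import Mathlib

section
/- Suppose ∫_{A₋(μ)}^0 μ̄₋(x)^{1/2} dx = ∞ and ∫_0^{A₊(μ)} μ̄₊(x)^{1/2} dx = ∞. Then G₁(b) = ∞ for every admissible drift b; equivalently, the expected search time (2/D)·G₁(b) is infinite for every admissible drift. -/
open MeasureTheory Set Real
open scoped ENNReal

noncomputable section

namespace DiffusiveSearch

/-- `b` is piecewise continuous and locally bounded on `s`. -/
def PCLB (b : ℝ → ℝ) (s : Set ℝ) : Prop :=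
  (∃ E : Set ℝ, E.Countable ∧ ContinuousOn b (s \ E)) ∧
  ∀ K : Set ℝ, IsCompact K → K ⊆ s → ∃ M : ℝ, ∀ x ∈ K, |b x| ≤ M

/-- The left edge `A₋(μ)` of the support of the negative part of the target
distribution: `inf {x < 0 : μ₋((-∞,x]) > 0}`, as an extended real number. -/
def Aminus (ν : Measure ℝ) : EReal :=
  sInf ((fun x : ℝ => (x : EReal)) '' {x : ℝ | x < 0 ∧ 0 < ν (Iic x)})

/-- The right edge `A₊(μ)` of the support of the positive part of the target
distribution: `sup {x > 0 : μ₊([x,∞)) > 0}`, as an extended real number. -/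
def Aplus (ν : Measure ℝ) : EReal :=
  sSup ((fun x : ℝ => (x : EReal)) '' {x : ℝ | 0 < x ∧ 0 < ν (Ici x)})

/-- The open real interval with extended-real endpoints. -/
def io (l r : EReal) : Set ℝ := {x : ℝ | l < (x : EReal) ∧ (x : EReal) < r}

/-- `∫_0^x b(y) dy`. -/
def Bint (b : ℝ → ℝ) (x : ℝ) : ℝ := ∫ y in (0:ℝ)..x, b y

/-- The scale weight `exp((2/D)∫_0^x b(y) dy)`, as an extended nonnegative real. -/
def w (D : ℝ) (b : ℝ → ℝ) (x : ℝ) : ℝ≥0∞ := ENNReal.ofReal (Real.exp ((2/D) * Bint b x))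

/-- `b` is an admissible drift: piecewise continuous and locally bounded on
`(A₋, A₊)`, with finite scale integral (positive recurrence). -/
def Admissible (D : ℝ) (Am Ap : EReal) (b : ℝ → ℝ) : Prop :=
  PCLB b (io Am Ap) ∧ (∫⁻ x in io Am Ap, w D b x) < ⊤

/-- The tail `μ̄₋(x) = μ₋((-∞,x))`. -/
def tailm (μm : Measure ℝ) (x : ℝ) : ℝ := (μm (Iio x)).toReal

/-- The tail `μ̄₊(x) = μ₊((x,∞))`. -/
def tailp (μp : Measure ℝ) (x : ℝ) : ℝ := (μp (Ioi x)).toReal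

/-- The functional `G₁(b)`; `(2/D)·G₁(b)` is the expected search time. -/
def G1 (D p : ℝ) (μm μp : Measure ℝ) (b : ℝ → ℝ) : ℝ≥0∞ :=
  ENNReal.ofReal (1 - p) *
    ∫⁻ a in io (Aminus μm) 0,
      ENNReal.ofReal (tailm μm a * Real.exp (-(2/D) * Bint b a)) *
        (∫⁻ z in io (a : EReal) (Aplus μp), w D b z)
  + ENNReal.ofReal p *
    ∫⁻ a in io 0 (Aplus μp),
      ENNReal.ofReal (tailp μp a * Real.exp (-(2/D) * Bint b a)) *
        (∫⁻ z in io (Aminus μm) (a : EReal), w D b z)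

/-- `I₋ = ∫_{A₋(μ)}^0 μ̄₋(x)^{1/2} dx`, with values in `[0,∞]`. -/
def Im (μm : Measure ℝ) : ℝ≥0∞ :=
  ∫⁻ x in io (Aminus μm) 0, ENNReal.ofReal (Real.sqrt (tailm μm x))

/-- `I₊ = ∫_0^{A₊(μ)} μ̄₊(x)^{1/2} dx`, with values in `[0,∞]`. -/
def Ip (μp : Measure ℝ) : ℝ≥0∞ :=
  ∫⁻ x in io 0 (Aplus μp), ENNReal.ofReal (Real.sqrt (tailp μp x))

/-- The square root balance condition: `I₋, I₊` finite and
`I₊/I₋ = ((1-p)·log(1-p))/(p·log p)`. -/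
def SRBC (p : ℝ) (μm μp : Measure ℝ) : Prop :=
  Im μm ≠ ⊤ ∧ Ip μp ≠ ⊤ ∧
    (Ip μp).toReal / (Im μm).toReal = ((1 - p) * Real.log (1 - p)) / (p * Real.log p)

/-- The value `V(μ) = (2/D)·[((1-p)/|log p|)·I₋² + (p/|log(1-p)|)·I₊²]`. -/
def Vval (D p : ℝ) (μm μp : Measure ℝ) : ℝ :=
  (2/D) * (((1 - p) / |Real.log p|) * ((Im μm).toReal)^2
    + (p / |Real.log (1 - p)|) * ((Ip μp).toReal)^2)

/-- The candidate optimal drift `b₀`, expressed through densities `fm` of `μ₋`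
and `fp` of `μ₊` (so that `μ̄₋' = fm` and `μ̄₊' = -fp`). -/
def b0 (D p : ℝ) (μm μp : Measure ℝ) (fm fp : ℝ → ℝ) (x : ℝ) : ℝ :=
  if x < 0 then
    D * ((1/4) * (fm x / tailm μm x)
      - |Real.log p| / (2 * (Im μm).toReal) * Real.sqrt (tailm μm x))
  else
    D * ((1/4) * (-(fp x) / tailp μp x)
      + |Real.log (1 - p)| / (2 * (Ip μp).toReal) * Real.sqrt (tailp μp x))

/-- `μ₋` restricted to `(A₋(μ),0)` is absolutely continuous with piecewise
continuous, locally bounded density `fm`. -/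
def NiceDensityM (μm : Measure ℝ) (fm : ℝ → ℝ) : Prop :=
  PCLB fm (io (Aminus μm) 0) ∧
    μm.restrict (io (Aminus μm) 0) =
      (volume.restrict (io (Aminus μm) 0)).withDensity (fun x => ENNReal.ofReal (fm x))

/-- `μ₊` restricted to `(0,A₊(μ))` is absolutely continuous with piecewise
continuous, locally bounded density `fp`. -/
def NiceDensityP (μp : Measure ℝ) (fp : ℝ → ℝ) : Prop :=
  PCLB fp (io 0 (Aplus μp)) ∧
    μp.restrict (io 0 (Aplus μp)) =
      (volume.restrict (io 0 (Aplus μp))).withDensity (fun x => ENNReal.ofReal (fp x))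

/-!
By AM-GM, `√t ≤ t e^{-r} + e^{r}`; with `t = μ̄₋(a)` and `r = (2/D)∫_0^a b` this gives
`I₋ ≤ ∫ μ̄₋(a) e^{-(2/D)∫_0^a b} da + ∫ e^{(2/D)∫_0^a b} da`, and the last integral is finite for
an admissible drift, so `I₋ = ∞` forces the first one to be infinite. For `a < 0` the inner
integral `∫_a^{A₊} e^{(2/D)∫_0^z b} dz` is at least `∫_0^{A₊} e^{(2/D)∫_0^z b} dz > 0`, hence
already the `μ₋`-part of `G₁(b)` is infinite.
-/

lemma isOpen_io (l r : EReal) : IsOpen (io l r) :=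
  isOpen_Ioo.preimage continuous_coe_real_ereal

lemma ordConnected_io (l r : EReal) : (io l r).OrdConnected :=
  ordConnected_Ioo.preimage_mono EReal.coe_strictMono.monotone

lemma lt_of_io_nonempty {l r : EReal} (h : (io l r).Nonempty) : l < r :=
  let ⟨_, hl, hr⟩ := h; hl.trans hr

lemma io_subset_io {l l' r r' : EReal} (hl : l' ≤ l) (hr : r ≤ r') : io l r ⊆ io l' r' :=
  fun _ ⟨h₁, h₂⟩ => ⟨hl.trans_lt h₁, h₂.trans_le hr⟩

section PCLB

variable {b : ℝ → ℝ} {s : Set ℝ}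

lemma PCLB.aemeasurable (hb : PCLB b s) (hs : MeasurableSet s) :
    AEMeasurable b (volume.restrict s) := by
  obtain ⟨⟨E, hE, hcont⟩, -⟩ := hb
  have hsE : s \ E =ᵐ[volume] s :=
    sdiff_ae_eq_self.2 (measure_mono_null inter_subset_right (hE.measure_zero volume))
  rw [← Measure.restrict_congr_set hsE]
  exact hcont.aemeasurable (hs.diff hE.measurableSet)

lemma PCLB.integrableOn (hb : PCLB b s) (hs : MeasurableSet s) {K : Set ℝ} (hK : IsCompact K)
    (hKs : K ⊆ s) : IntegrableOn b K := by
  obtain ⟨M, hM⟩ := hb.2 K hK hKs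
  exact ⟨((hb.aemeasurable hs).mono_set hKs).aestronglyMeasurable,
    .restrict_of_bounded (C := M) hK.measure_lt_top
      ((ae_restrict_iff' hK.measurableSet).2 (ae_of_all _ hM))⟩

lemma PCLB.continuousOn_Bint (hb : PCLB b s) (hs : IsOpen s) (hconn : s.OrdConnected)
    (h0 : (0 : ℝ) ∈ s) : ContinuousOn (Bint b) s := by
  intro x hx
  obtain ⟨u, v, hxuv, hnhds, huv⟩ := exists_Icc_mem_subset_of_mem_nhds (hs.mem_nhds hx)
  have hu : u ∈ s := huv ⟨le_rfl, hxuv.1.trans hxuv.2⟩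
  have hv : v ∈ s := huv ⟨hxuv.1.trans hxuv.2, le_rfl⟩
  have hK : uIcc (min 0 u) (max 0 v) ⊆ s :=
    hconn.uIcc_subset (min_rec' (· ∈ s) h0 hu) (max_rec' (· ∈ s) h0 hv)
  have hprim := intervalIntegral.continuousOn_primitive_interval'
    (hb.integrableOn hs.measurableSet isCompact_uIcc hK).intervalIntegrable
    (mem_uIcc_of_le (min_le_left _ _) (le_max_left _ _))
  have hIcc : Icc u v ⊆ uIcc (min 0 u) (max 0 v) :=
    (Icc_subset_Icc (min_le_right _ _) (le_max_right _ _)).trans Icc_subset_uIcc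
  exact ((hprim.mono hIcc).continuousAt hnhds).continuousWithinAt

lemma PCLB.aemeasurable_w (hb : PCLB b s) (hs : IsOpen s) (hconn : s.OrdConnected)
    (h0 : (0 : ℝ) ∈ s) (D : ℝ) : AEMeasurable (w D b) (volume.restrict s) :=
  (ENNReal.measurable_ofReal.comp Real.measurable_exp).comp_aemeasurable
    (((hb.continuousOn_Bint hs hconn h0).aemeasurable hs.measurableSet).const_mul (2 / D))

end PCLB

section LIntegral

variable {α : Type*} [MeasurableSpace α] {μ : Measure α} {s : Set α} {f g h : α → ℝ≥0∞}

lemma nonempty_of_setLIntegral_ne_zero (hf : ∫⁻ x in s, f x ∂μ ≠ 0) : s.Nonempty :=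
  nonempty_iff_ne_empty.2 fun hs => hf (by simp [hs])

lemma setLIntegral_pos_of_forall_pos (hs : MeasurableSet s) (hμs : μ s ≠ 0)
    (hf : AEMeasurable f (μ.restrict s)) (hpos : ∀ x ∈ s, 0 < f x) :
    0 < ∫⁻ x in s, f x ∂μ := by
  refine pos_iff_ne_zero.2 fun hzero => hμs ?_
  have hfalse : ∀ᵐ x ∂μ.restrict s, False := by
    filter_upwards [(lintegral_eq_zero_iff' hf).1 hzero, ae_restrict_mem hs] with x hx hxs
    exact (hpos x hxs).ne' hx
  simpa [ae_iff] using hfalse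

lemma lintegral_eq_top_of_le_add (hg : ∫⁻ x, g x ∂μ = ⊤) (hle : ∀ x, g x ≤ f x + h x)
    (hh : AEMeasurable h μ) (hh_top : ∫⁻ x, h x ∂μ ≠ ⊤) : ∫⁻ x, f x ∂μ = ⊤ := by
  by_contra hf_top
  have : ∫⁻ x, g x ∂μ ≤ ∫⁻ x, f x ∂μ + ∫⁻ x, h x ∂μ :=
    (lintegral_mono hle).trans (lintegral_add_right' f hh).le
  exact ENNReal.add_ne_top.2 ⟨hf_top, hh_top⟩ (top_le_iff.1 (hg ▸ this))

lemma lintegral_mul_eq_top_of_le {c : ℝ≥0∞} (hf : ∫⁻ x, f x ∂μ = ⊤) (hc : c ≠ 0)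
    (hg : ∀ᵐ x ∂μ, c ≤ g x) : ∫⁻ x, f x * g x ∂μ = ⊤ :=
  eq_top_iff.2 <| calc
    ⊤ = (∫⁻ x, f x ∂μ) * c := by rw [hf, ENNReal.top_mul hc]
    _ ≤ ∫⁻ x, f x * c ∂μ := lintegral_mul_const_le c f
    _ ≤ ∫⁻ x, f x * g x ∂μ := lintegral_mono_ae (hg.mono fun x hx => by gcongr)

end LIntegral

lemma ofReal_sqrt_le_mul_exp_neg_add_exp {t : ℝ} (ht : 0 ≤ t) (r : ℝ) :
    ENNReal.ofReal √t ≤ ENNReal.ofReal (t * exp (-r)) + ENNReal.ofReal (exp r) := by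
  have hu := sqrt_nonneg (t * exp (-r))
  have hv := sqrt_nonneg (exp r)
  rw [← ENNReal.ofReal_add (by positivity) (exp_pos r).le]
  refine ENNReal.ofReal_le_ofReal ?_
  calc √t = √(t * exp (-r)) * √(exp r) := by
        rw [← sqrt_mul (by positivity), mul_assoc, ← exp_add, neg_add_cancel, exp_zero, mul_one]
    _ ≤ 2 * √(t * exp (-r)) * √(exp r) := by nlinarith [mul_nonneg hu hv]
    _ ≤ √(t * exp (-r)) ^ 2 + √(exp r) ^ 2 := two_mul_le_add_sq _ _
    _ = t * exp (-r) + exp r := by rw [sq_sqrt (by positivity), sq_sqrt (exp_pos r).le]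

section SearchTime

variable {D p : ℝ} {μm μp : Measure ℝ} {b : ℝ → ℝ}

lemma lintegral_tailm_mul_exp_eq_top (hIm : Im μm = ⊤)
    (hw : AEMeasurable (w D b) (volume.restrict (io (Aminus μm) 0)))
    (hw_top : ∫⁻ x in io (Aminus μm) 0, w D b x ≠ ⊤) :
    ∫⁻ a in io (Aminus μm) 0, ENNReal.ofReal (tailm μm a * exp (-(2 / D) * Bint b a)) = ⊤ := by
  refine lintegral_eq_top_of_le_add hIm (fun x => ?_) hw hw_top
  simpa only [w, neg_mul] using
    ofReal_sqrt_le_mul_exp_neg_add_exp (t := tailm μm x) ENNReal.toReal_nonneg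
      ((2 / D) * Bint b x)

lemma G1_eq_top_of_lintegral_eq_top (hp1 : p < 1)
    (h : ∫⁻ a in io (Aminus μm) 0, ENNReal.ofReal (tailm μm a * exp (-(2 / D) * Bint b a)) *
      (∫⁻ z in io (a : EReal) (Aplus μp), w D b z) = ⊤) :
    G1 D p μm μp b = ⊤ := by
  have h1p : ENNReal.ofReal (1 - p) ≠ 0 := (ENNReal.ofReal_pos.2 (sub_pos.2 hp1)).ne'
  refine eq_top_iff.2 ((ENNReal.mul_top h1p).symm.trans_le ?_)
  rw [← h, G1]
  -- `G1` parses with its `p`-term inside the first `∫⁻` (the binder extends over the `+`)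
  gcongr with a
  exact le_self_add

end SearchTime

theorem search_time_infinite_of_balance_integrals_infinite_general
    (D p : ℝ) (hp1 : p < 1)
    (μm μp : Measure ℝ)
    (hIm : Im μm = ⊤) (hIp : Ip μp = ⊤)
    (b : ℝ → ℝ) (hb : Admissible D (Aminus μm) (Aplus μp) b) :
    G1 D p μm μp b = ⊤ := by
  obtain ⟨hbP, hbS⟩ := hb
  have hAm : Aminus μm < 0 :=
    lt_of_io_nonempty (nonempty_of_setLIntegral_ne_zero (hIm.trans_ne ENNReal.top_ne_zero))
  have hpos_ne : (io 0 (Aplus μp)).Nonempty :=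
    nonempty_of_setLIntegral_ne_zero (hIp.trans_ne ENNReal.top_ne_zero)
  have hAp : 0 < Aplus μp := lt_of_io_nonempty hpos_ne
  have hw := hbP.aemeasurable_w (isOpen_io _ _) (ordConnected_io _ _)
    ⟨by rwa [EReal.coe_zero], by rwa [EReal.coe_zero]⟩ D
  have hneg_sub : io (Aminus μm) 0 ⊆ io (Aminus μm) (Aplus μp) := io_subset_io le_rfl hAp.le
  have hneg_top := lintegral_tailm_mul_exp_eq_top hIm (hw.mono_set hneg_sub)
    ((lintegral_mono_set hneg_sub).trans_lt hbS).ne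
  have hpos_w : 0 < ∫⁻ z in io 0 (Aplus μp), w D b z :=
    setLIntegral_pos_of_forall_pos (isOpen_io _ _).measurableSet
      ((isOpen_io _ _).measure_ne_zero volume hpos_ne) (hw.mono_set (io_subset_io hAm.le le_rfl))
      fun z _ => ENNReal.ofReal_pos.2 (exp_pos _)
  refine G1_eq_top_of_lintegral_eq_top hp1 (lintegral_mul_eq_top_of_le hneg_top hpos_w.ne' ?_)
  exact ae_restrict_of_forall_mem (isOpen_io _ _).measurableSet fun a ha =>
    lintegral_mono_set (io_subset_io ha.2.le le_rfl)

/-- if both square-root tail integrals are infinite, then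
`G₁(b) = ∞` for every admissible drift `b`. -/
theorem search_time_infinite_of_balance_integrals_infinite
    (D p : ℝ) (hD : 0 < D) (hp : 0 < p) (hp1 : p < 1)
    (μm μp : Measure ℝ) [IsProbabilityMeasure μm] [IsProbabilityMeasure μp]
    (hμm : μm (Ici 0) = 0) (hμp : μp (Iic 0) = 0)
    (hIm : Im μm = ⊤) (hIp : Ip μp = ⊤)
    (b : ℝ → ℝ) (hb : Admissible D (Aminus μm) (Aplus μp) b) :
    G1 D p μm μp b = ⊤ :=
  search_time_infinite_of_balance_integrals_infinite_general D p hp1 μm μp hIm hIp b hb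

end DiffusiveSearch
end
end

section
/- Let ν be a Borel probability measure on (0,∞) and set ν̄(x) = ν((x,∞)) for x ≥ 0. If ∫_0^∞ x²·|log x|^{1+ε} ν(dx) < ∞ for some ε > 0, then ∫_0^∞ ν̄(x)^{1/2} dx < ∞. -/
open MeasureTheory Set Real
open scoped ENNReal

noncomputable section

namespace DiffusiveSearch

/-! On `(0, e]` the integrand is at most `1`. Beyond `e`, AM–GM with the weight
`a(x) = x (log x)^{1+ε}` gives `√ν̄(x) ≤ ν̄(x) a(x) + 1/a(x)`. The second term is integrable
because `1/a` is the derivative of `-(log x)^{-ε}/ε`, and by Tonelli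
`∫_e^∞ ν̄(x) a(x) dx = ∫ (∫_e^y a) ν(dy) ≤ ∫ y a(y) ν(dy)`, which is the assumed moment. -/

lemma sqrt_le_mul_add_inv {t a : ℝ} (ht : 0 ≤ t) (ha : 0 < a) : √t ≤ t * a + a⁻¹ := by
  have amgm : 2 * √t ≤ t * a + a⁻¹ := by
    rw [← mul_le_mul_iff_of_pos_right ha]
    field_simp
    nlinarith [sq_nonneg (√t * a - 1), Real.sq_sqrt ht]
  linarith [Real.sqrt_nonneg t]

lemma ofReal_sqrt_toReal_le_mul_add_inv {m : ℝ≥0∞} (hm : m ≠ ⊤) {a : ℝ} (ha : 0 < a) :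
    ENNReal.ofReal √m.toReal ≤ m * ENNReal.ofReal a + ENNReal.ofReal a⁻¹ := by
  have ht : 0 ≤ m.toReal := ENNReal.toReal_nonneg
  calc ENNReal.ofReal √m.toReal ≤ ENNReal.ofReal (m.toReal * a + a⁻¹) :=
        ENNReal.ofReal_le_ofReal (sqrt_le_mul_add_inv ht ha)
    _ = m * ENNReal.ofReal a + ENNReal.ofReal a⁻¹ := by
        rw [ENNReal.ofReal_add (by positivity) (by positivity), ENNReal.ofReal_mul ht,
          ENNReal.ofReal_toReal hm]

lemma integrableOn_inv_mul_log_rpow {c ε : ℝ} (hc : 1 < c) (hε : 0 < ε) :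
    IntegrableOn (fun x => (x * log x ^ (1 + ε))⁻¹) (Ioi c) := by
  have hlog_pos : ∀ x ∈ Ici c, 0 < log x := fun x hx => log_pos (hc.trans_le hx)
  refine integrableOn_Ioi_deriv_of_nonneg' (l := 0) (g := fun x => -ε⁻¹ * log x ^ (-ε))
    (fun x hx => ?_) (fun x hx => ?_) ?_
  · have hx0 : x ≠ 0 := by linarith [mem_Ici.1 hx]
    refine (((hasDerivAt_log hx0).rpow_const (p := -ε) (Or.inl (hlog_pos x hx).ne')).const_mul
      (-ε⁻¹)).congr_deriv ?_
    rw [show -ε - 1 = -(1 + ε) by ring, rpow_neg (hlog_pos x hx).le]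
    field_simp
  · have hlog := hlog_pos x (mem_Ici_of_Ioi hx)
    have hx0 : 0 < x := by linarith [mem_Ioi.1 hx]
    positivity
  · simpa using ((tendsto_rpow_neg_atTop hε).comp tendsto_log_atTop).const_mul (-ε⁻¹)

lemma setLIntegral_measure_Ioi_mul (ν : Measure ℝ) [SFinite ν] (s : Set ℝ)
    {g : ℝ → ℝ≥0∞} (hg : Measurable g) :
    ∫⁻ x in s, ν (Ioi x) * g x = ∫⁻ y, (∫⁻ x in s ∩ Iio y, g x) ∂ν := by
  have hF : Measurable (Function.uncurry fun x y : ℝ => {p : ℝ × ℝ | p.1 < p.2}.indicator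
      (fun p => g p.1) (x, y)) :=
    (hg.comp measurable_fst).indicator (measurableSet_lt measurable_fst measurable_snd)
  calc ∫⁻ x in s, ν (Ioi x) * g x
      = ∫⁻ x in s, ∫⁻ y, {p : ℝ × ℝ | p.1 < p.2}.indicator (fun p => g p.1) (x, y) ∂ν := by
        refine lintegral_congr fun x => ?_
        rw [mul_comm, ← lintegral_indicator_const measurableSet_Ioi]
        rfl
    _ = ∫⁻ y, (∫⁻ x in s, {p : ℝ × ℝ | p.1 < p.2}.indicator (fun p => g p.1) (x, y)) ∂ν :=
        lintegral_lintegral_swap hF.aemeasurable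
    _ = ∫⁻ y, (∫⁻ x in s ∩ Iio y, g x) ∂ν := by
        refine lintegral_congr fun y => ?_
        rw [inter_comm, ← Measure.restrict_restrict measurableSet_Iio,
          ← lintegral_indicator measurableSet_Iio]
        rfl

lemma setLIntegral_Ioo_mul_log_rpow_le {c y p : ℝ} (hc : 1 ≤ c) (hp : 0 ≤ p) :
    ∫⁻ x in Ioo c y, ENNReal.ofReal (x * log x ^ p) ≤ ENNReal.ofReal (y ^ 2 * |log y| ^ p) := by
  rcases le_or_gt y c with hyc | hcy
  · simp [Ioo_eq_empty_of_le hyc]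
  have hy : 0 ≤ log y := log_nonneg (hc.trans hcy.le)
  calc ∫⁻ x in Ioo c y, ENNReal.ofReal (x * log x ^ p)
      ≤ ∫⁻ _ in Ioo c y, ENNReal.ofReal (y * log y ^ p) := by
        refine setLIntegral_mono measurable_const fun x hx => ENNReal.ofReal_le_ofReal ?_
        have hlog_x : 0 ≤ log x := log_nonneg (hc.trans hx.1.le)
        exact mul_le_mul hx.2.le (rpow_le_rpow hlog_x (log_le_log (by linarith [hx.1]) hx.2.le) hp)
          (rpow_nonneg hlog_x _) (by linarith)
    _ ≤ ENNReal.ofReal (y * log y ^ p) * ENNReal.ofReal y := by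
        rw [setLIntegral_const, Real.volume_Ioo]
        gcongr
        linarith
    _ = ENNReal.ofReal (y ^ 2 * |log y| ^ p) := by
        rw [← ENNReal.ofReal_mul (mul_nonneg (by linarith) (rpow_nonneg hy _)), abs_of_nonneg hy]
        congr 1
        ring

lemma setLIntegral_measure_Ioi_mul_log_rpow_le (ν : Measure ℝ) [SFinite ν] {c p : ℝ} (hc : 1 ≤ c)
    (hp : 0 ≤ p) :
    ∫⁻ x in Ioi c, ν (Ioi x) * ENNReal.ofReal (x * log x ^ p) ≤
      ∫⁻ y in Ioi 0, ENNReal.ofReal (y ^ 2 * |log y| ^ p) ∂ν := by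
  rw [setLIntegral_measure_Ioi_mul ν _ (by fun_prop), ← lintegral_indicator measurableSet_Ioi]
  refine lintegral_mono fun y => ?_
  rcases le_or_gt y 0 with hy | hy
  · rw [Ioi_inter_Iio, Ioo_eq_empty_of_le (hy.trans (by linarith))]
    simp
  · rw [indicator_of_mem (mem_Ioi.2 hy), Ioi_inter_Iio]
    exact setLIntegral_Ioo_mul_log_rpow_le hc hp

theorem sqrt_tail_integrable_of_moment_general
    (ν : Measure ℝ) [IsProbabilityMeasure ν]
    (ε : ℝ) (hε : 0 < ε)
    (hmom : (∫⁻ x in Ioi (0:ℝ), ENNReal.ofReal (x ^ 2 * |Real.log x| ^ (1 + ε)) ∂ν) < ⊤) :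
    (∫⁻ x in Ioi (0:ℝ), ENNReal.ofReal (Real.sqrt ((ν (Ioi x)).toReal))) < ⊤ := by
  have he : 1 < exp 1 := one_lt_exp_iff.2 one_pos
  rw [← Ioc_union_Ioi_eq_Ioi (by linarith : (0:ℝ) ≤ exp 1),
    lintegral_union measurableSet_Ioi (Ioc_disjoint_Ioi le_rfl)]
  refine ENNReal.add_lt_top.2 ⟨setLIntegral_lt_top_of_le_nnreal measure_Ioc_lt_top.ne
    ⟨1, fun x _ => ?_⟩, ?_⟩
  · simpa using ENNReal.toReal_le_of_le_ofReal zero_le_one (by simpa using prob_le_one)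
  have hT : Measurable fun x => ν (Ioi x) :=
    Antitone.measurable fun _ _ h => measure_mono (Ioi_subset_Ioi h)
  have hweight : ∀ x ∈ Ioi (exp 1), 0 < x * log x ^ (1 + ε) := fun x hx =>
    mul_pos (by linarith [mem_Ioi.1 hx]) (rpow_pos_of_pos (log_pos (he.trans hx)) _)
  calc ∫⁻ x in Ioi (exp 1), ENNReal.ofReal √(ν (Ioi x)).toReal
      ≤ ∫⁻ x in Ioi (exp 1), ν (Ioi x) * ENNReal.ofReal (x * log x ^ (1 + ε)) +
          ENNReal.ofReal (x * log x ^ (1 + ε))⁻¹ :=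
        setLIntegral_mono ((hT.mul (by fun_prop)).add (by fun_prop)) fun x hx =>
          ofReal_sqrt_toReal_le_mul_add_inv (measure_ne_top ν _) (hweight x hx)
    _ = (∫⁻ x in Ioi (exp 1), ν (Ioi x) * ENNReal.ofReal (x * log x ^ (1 + ε))) +
          ∫⁻ x in Ioi (exp 1), ENNReal.ofReal (x * log x ^ (1 + ε))⁻¹ :=
        lintegral_add_left (hT.mul (by fun_prop)) _
    _ < ⊤ := ENNReal.add_lt_top.2
        ⟨(setLIntegral_measure_Ioi_mul_log_rpow_le ν he.le (by linarith)).trans_lt hmom,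
          (integrableOn_inv_mul_log_rpow he hε).setLIntegral_lt_top⟩

/-- a `x²·|log x|^{1+ε}` moment bound implies finiteness of the
square-root tail integral. -/
theorem sqrt_tail_integrable_of_moment
    (ν : Measure ℝ) [IsProbabilityMeasure ν] (hν : ν (Iic 0) = 0)
    (ε : ℝ) (hε : 0 < ε)
    (hmom : (∫⁻ x in Ioi (0:ℝ), ENNReal.ofReal (x ^ 2 * |Real.log x| ^ (1 + ε)) ∂ν) < ⊤) :
    (∫⁻ x in Ioi (0:ℝ), ENNReal.ofReal (Real.sqrt ((ν (Ioi x)).toReal))) < ⊤ :=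
  sqrt_tail_integrable_of_moment_general ν ε hε hmom
end DiffusiveSearch
end
end

section
/- There exists a Borel probability measure ν on (0,∞) such that ∫_0^∞ x²·|log x|^{1-ε} ν(dx) < ∞ for every ε ∈ (0,1), yet ∫_0^∞ ν̄(x)^{1/2} dx = ∞. In particular, any probability measure ν on (0,∞) whose tail satisfies ν̄(x) = x^{-2}(log x)^{-2} for all x ≥ 2 has this property. -/
open MeasureTheory Set Real
open scoped ENNReal

noncomputable section

namespace DiffusiveSearch

/-! The tail `ν̄(x) = (x log x)⁻²` on `[2, ∞)` is realised by the Stieltjes function `1 - ν̄`,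
extended by `0` below `2`. Its square root `(x log x)⁻¹` has antiderivative `log log x`, so
`∫ √ν̄ = ∞`. On the other hand, on the dyadic shell `(2^k, 2^(k+1)]` the moment integrand
`x² (log x)^(1-ε)` is `O(4^k k^(1-ε))`, while the shell has mass at most `ν̄(2^k) = O(4^(-k) k⁻²)`;
the resulting series `∑ k^(-1-ε)` converges. -/

open Filter Topology

theorem rpow_le_one_add_self {y p : ℝ} (hy : 0 ≤ y) (hp0 : 0 ≤ p) (hp1 : p ≤ 1) :
    y ^ p ≤ 1 + y := by
  rcases le_or_gt y 1 with hy1 | hy1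
  · linarith [rpow_le_one hy hy1 hp0]
  · linarith [rpow_le_self_of_one_le hy1.le hp1]

theorem abs_log_le_add_inv {x : ℝ} (hx : 0 < x) : |log x| ≤ x + x⁻¹ := by
  rw [abs_le]
  constructor <;> linarith [one_sub_inv_le_log_of_pos hx, log_le_sub_one_of_pos hx, inv_pos.2 hx]

theorem sq_mul_abs_log_rpow_le {x p : ℝ} (hx : 0 < x) (hp0 : 0 ≤ p) (hp1 : p ≤ 1) :
    x ^ 2 * |log x| ^ p ≤ x ^ 2 + x ^ 3 + x :=
  calc x ^ 2 * |log x| ^ p ≤ x ^ 2 * (1 + (x + x⁻¹)) := by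
        gcongr
        exact (rpow_le_one_add_self (abs_nonneg _) hp0 hp1).trans
          (by gcongr; exact abs_log_le_add_inv hx)
    _ = x ^ 2 + x ^ 3 + x := by field_simp; ring

theorem sq_mul_abs_log_rpow_two_mul_div_le {y p : ℝ} (hy : 2 ≤ y) (hp0 : 0 ≤ p) (hp1 : p ≤ 1) :
    (2 * y) ^ 2 * |log (2 * y)| ^ p * (1 / (y ^ 2 * log y ^ 2)) ≤ 8 * log y ^ (p - 2) := by
  have hy0 : 0 < y := by linarith
  have hly : 0 < log y := log_pos (by linarith)
  have hlog2y : |log (2 * y)| ≤ 2 * log y := by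
    rw [abs_of_pos (log_pos (by linarith)), log_mul two_ne_zero hy0.ne']
    linarith [log_le_log two_pos hy]
  have hpow : |log (2 * y)| ^ p ≤ 2 * log y ^ p :=
    calc |log (2 * y)| ^ p ≤ (2 * log y) ^ p := rpow_le_rpow (abs_nonneg _) hlog2y hp0
      _ = 2 ^ p * log y ^ p := mul_rpow zero_le_two hly.le
      _ ≤ 2 * log y ^ p := by
          gcongr
          simpa using rpow_le_rpow_of_exponent_le one_le_two hp1
  calc (2 * y) ^ 2 * |log (2 * y)| ^ p * (1 / (y ^ 2 * log y ^ 2))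
      ≤ (2 * y) ^ 2 * (2 * log y ^ p) * (1 / (y ^ 2 * log y ^ 2)) := by gcongr
    _ = 8 * (log y ^ p / log y ^ 2) := by field_simp; ring
    _ = 8 * log y ^ (p - 2) := by rw [rpow_sub hly, rpow_two]

theorem Ioi_subset_iUnion_Ioc_two_pow_mul {a : ℝ} (ha : 0 < a) :
    Ioi a ⊆ ⋃ n : ℕ, Ioc (2 ^ n * a) (2 ^ (n + 1) * a) := by
  intro x (hx : a < x)
  obtain ⟨n, hn⟩ := exists_mem_Ioc_zpow (div_pos (ha.trans hx) ha) one_lt_two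
  have hn0 : 0 ≤ n := by
    by_contra! hneg
    have : (2 : ℝ) ^ (n + 1) ≤ 1 := zpow_le_one_of_nonpos₀ one_le_two (by omega)
    linarith [hn.2, (one_lt_div ha).2 hx]
  lift n to ℕ using hn0
  rw [← Nat.cast_succ, zpow_natCast, zpow_natCast, mem_Ioc, lt_div_iff₀ ha, div_le_iff₀ ha]
    at hn
  exact mem_iUnion.2 ⟨n, hn⟩

theorem setLIntegral_Ioi_le_tsum_two_pow (ν : Measure ℝ) {a : ℝ} (ha : 0 < a) {f : ℝ → ℝ≥0∞}
    (hf : MonotoneOn f (Ioi a)) :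
    ∫⁻ x in Ioi a, f x ∂ν ≤ ∑' n : ℕ, f (2 ^ (n + 1) * a) * ν (Ioi (2 ^ n * a)) :=
  calc ∫⁻ x in Ioi a, f x ∂ν
      ≤ ∫⁻ x in ⋃ n : ℕ, Ioc (2 ^ n * a) (2 ^ (n + 1) * a), f x ∂ν :=
        lintegral_mono_set (Ioi_subset_iUnion_Ioc_two_pow_mul ha)
    _ ≤ ∑' n : ℕ, ∫⁻ x in Ioc (2 ^ n * a) (2 ^ (n + 1) * a), f x ∂ν := lintegral_iUnion_le _ _
    _ ≤ ∑' n : ℕ, f (2 ^ (n + 1) * a) * ν (Ioi (2 ^ n * a)) := by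
        refine ENNReal.tsum_le_tsum fun n => ?_
        have hshell : Ioc (2 ^ n * a) (2 ^ (n + 1) * a) ⊆ Ioi a := fun x hx =>
          lt_of_le_of_lt (le_mul_of_one_le_left ha.le (one_le_pow₀ one_le_two)) hx.1
        calc ∫⁻ x in Ioc (2 ^ n * a) (2 ^ (n + 1) * a), f x ∂ν
            ≤ ∫⁻ _ in Ioc (2 ^ n * a) (2 ^ (n + 1) * a), f (2 ^ (n + 1) * a) ∂ν :=
              setLIntegral_mono' measurableSet_Ioc fun x hx =>
                hf (hshell hx) (hshell (right_mem_Ioc.2 (hx.1.trans_le hx.2))) hx.2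
          _ ≤ f (2 ^ (n + 1) * a) * ν (Ioi (2 ^ n * a)) := by
              rw [setLIntegral_const]
              gcongr; exact Ioc_subset_Ioi_self

theorem lintegral_sq_mul_abs_log_rpow_lt_top (ν : Measure ℝ) [IsFiniteMeasure ν] {p : ℝ}
    (hp0 : 0 ≤ p) (hp1 : p < 1)
    (htail : ∀ x : ℝ, 2 ≤ x → (ν (Ioi x)).toReal = 1 / (x ^ 2 * log x ^ 2)) :
    ∫⁻ x in Ioi 0, ENNReal.ofReal (x ^ 2 * |log x| ^ p) ∂ν < ⊤ := by
  set f : ℝ → ℝ≥0∞ := fun x => ENNReal.ofReal (x ^ 2 * |log x| ^ p)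
  have hnear : ∫⁻ x in Ioc 0 2, f x ∂ν < ⊤ :=
    calc ∫⁻ x in Ioc 0 2, f x ∂ν ≤ ∫⁻ _ in Ioc 0 2, ENNReal.ofReal 14 ∂ν := by
          refine setLIntegral_mono' measurableSet_Ioc fun x ⟨hx0, hx2⟩ => ?_
          refine ENNReal.ofReal_le_ofReal ((sq_mul_abs_log_rpow_le hx0 hp0 hp1.le).trans ?_)
          nlinarith
      _ < ⊤ := by
          rw [setLIntegral_const]
          exact ENNReal.mul_lt_top ENNReal.ofReal_lt_top (measure_lt_top ν _)
  have hmono : MonotoneOn f (Ioi 2) := by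
    intro x (hx : 2 < x) y (hy : 2 < y) hxy
    have hlx : 0 ≤ log x := log_nonneg (by linarith)
    refine ENNReal.ofReal_le_ofReal ?_
    rw [abs_of_nonneg hlx, abs_of_nonneg (log_nonneg (by linarith))]
    gcongr
  have hshell (n : ℕ) : f (2 ^ (n + 1) * 2) * ν (Ioi (2 ^ n * 2)) ≤
      ENNReal.ofReal (8 * log 2 ^ (p - 2) * ((n : ℝ) + 1) ^ (p - 2)) := by
    have hy : (2 : ℝ) ≤ 2 ^ n * 2 := le_mul_of_one_le_left zero_le_two (one_le_pow₀ one_le_two)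
    have hlog : log (2 ^ n * 2) = ((n : ℝ) + 1) * log 2 := by
      rw [← pow_succ, log_pow]; push_cast; ring
    rw [show (2 : ℝ) ^ (n + 1) * 2 = 2 * (2 ^ n * 2) by ring,
      ← ENNReal.ofReal_toReal (measure_ne_top ν _), htail _ hy,
      ← ENNReal.ofReal_mul (by positivity)]
    refine ENNReal.ofReal_le_ofReal
      ((sq_mul_abs_log_rpow_two_mul_div_le hy hp0 hp1.le).trans_eq ?_)
    rw [hlog, mul_rpow (by positivity) (log_pos one_lt_two).le]
    ring
  have hsum : Summable fun n : ℕ => 8 * log 2 ^ (p - 2) * ((n : ℝ) + 1) ^ (p - 2) := by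
    refine Summable.mul_left _ ?_
    exact_mod_cast (summable_nat_add_iff 1).2 (summable_nat_rpow.2 (by linarith))
  have hfar : ∫⁻ x in Ioi 2, f x ∂ν < ⊤ :=
    calc ∫⁻ x in Ioi 2, f x ∂ν ≤ ∑' n : ℕ, f (2 ^ (n + 1) * 2) * ν (Ioi (2 ^ n * 2)) :=
          setLIntegral_Ioi_le_tsum_two_pow ν two_pos hmono
      _ ≤ ∑' n : ℕ, ENNReal.ofReal (8 * log 2 ^ (p - 2) * ((n : ℝ) + 1) ^ (p - 2)) :=
          ENNReal.tsum_le_tsum hshell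
      _ < ⊤ := by
          rw [← ENNReal.ofReal_tsum_of_nonneg (fun n => by positivity) hsum]
          exact ENNReal.ofReal_lt_top
  rw [← Ioc_union_Ioi_eq_Ioi zero_le_two]
  exact (lintegral_union_le _ _ _).trans_lt (ENNReal.add_lt_top.2 ⟨hnear, hfar⟩)

theorem not_integrableOn_Ioi_inv_div_log (a : ℝ) :
    ¬ IntegrableOn (fun x => x⁻¹ / log x) (Ioi a) := by
  have hderiv : ∀ᶠ x in atTop, HasDerivAt (fun x => log (log x)) (x⁻¹ / log x) x := by
    filter_upwards [Ioi_mem_atTop 1] with x hx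
    exact hasDerivAt_log_log (by grind) (by grind) (by grind)
  exact not_integrableOn_of_tendsto_norm_atTop_of_deriv_isBigO_filter atTop (Ioi_mem_atTop a)
    (hderiv.mono fun x hx => hx.differentiableAt)
    (tendsto_norm_atTop_atTop.comp (tendsto_log_atTop.comp tendsto_log_atTop))
    (EventuallyEq.isBigO (hderiv.mono fun x hx => hx.deriv))

theorem lintegral_sqrt_tail_eq_top (ν : Measure ℝ)
    (htail : ∀ x : ℝ, 2 ≤ x → (ν (Ioi x)).toReal = 1 / (x ^ 2 * log x ^ 2)) :
    ∫⁻ x in Ioi 0, ENNReal.ofReal (√(ν (Ioi x)).toReal) = ⊤ := by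
  have hdiv : ∫⁻ x in Ioi 2, ENNReal.ofReal (x⁻¹ / log x) = ⊤ := by
    by_contra hfin
    refine not_integrableOn_Ioi_inv_div_log 2
      ((lintegral_ofReal_ne_top_iff_integrable ?_ ?_).1 hfin)
    · exact (measurable_inv.div measurable_log).aestronglyMeasurable
    · filter_upwards [ae_restrict_mem measurableSet_Ioi] with x (hx : 2 < x)
      exact div_nonneg (inv_nonneg.2 (by linarith)) (log_nonneg (by linarith))
  have hsqrt : EqOn (fun x => ENNReal.ofReal (√(ν (Ioi x)).toReal))
      (fun x => ENNReal.ofReal (x⁻¹ / log x)) (Ioi 2) := fun x (hx : 2 < x) => by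
    have hlog : 0 < log x := log_pos (by linarith)
    dsimp only
    rw [htail x hx.le, ← mul_pow, one_div, sqrt_inv, sqrt_sq (by positivity), mul_inv,
      div_eq_mul_inv]
  refine top_unique ?_
  rw [← hdiv, ← setLIntegral_congr_fun measurableSet_Ioi hsqrt]
  exact lintegral_mono_set (Ioi_subset_Ioi zero_le_two)

theorem exists_isProbabilityMeasure_measure_Ioi_eq {a : ℝ} (ha : 0 < a) {t : ℝ → ℝ}
    (ht_anti : AntitoneOn t (Ici a)) (ht_cont : ContinuousOn t (Ici a)) (ht_le : t a ≤ 1)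
    (ht_lim : Tendsto t atTop (𝓝 0)) :
    ∃ ν : Measure ℝ, IsProbabilityMeasure ν ∧ ν (Iic 0) = 0 ∧
      ∀ x, a ≤ x → ν (Ioi x) = ENNReal.ofReal (t x) := by
  let F : StieltjesFunction ℝ :=
    { toFun := fun x => if x < a then 0 else 1 - t x
      mono' := by
        intro x y hxy
        by_cases hy : y < a
        · simp [hy, hxy.trans_lt hy]
        by_cases hx : x < a
        · simpa [hx, hy] using (ht_anti self_mem_Ici (not_lt.1 hy) (not_lt.1 hy)).trans ht_le
        · simp only [hx, hy, if_false]
          linarith [ht_anti (not_lt.1 hx) (not_lt.1 hy) hxy]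
      right_continuous' := by
        intro x
        by_cases hx : x < a
        · refine (continuousWithinAt_const (b := (0 : ℝ))).congr_of_eventuallyEq ?_ (if_pos hx)
          filter_upwards [nhdsWithin_le_nhds (Iio_mem_nhds hx)] with y hy using if_pos hy
        · have hxa : a ≤ x := not_lt.1 hx
          exact (continuousWithinAt_const.sub ((ht_cont x hxa).mono (Ici_subset_Ici.2 hxa))).congr
            (fun y hy => if_neg (not_lt.2 (hxa.trans hy))) (if_neg hx) }
  have hF_bot : Tendsto F atBot (𝓝 0) :=
    tendsto_const_nhds.congr' <| (eventually_lt_atBot a).mono fun x hx => (if_pos hx).symm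
  have hF_top : Tendsto F atTop (𝓝 1) := by
    have h : Tendsto (fun x => 1 - t x) atTop (𝓝 1) := by
      simpa using tendsto_const_nhds.sub ht_lim
    exact h.congr' <| (eventually_ge_atTop a).mono fun x hx => (if_neg (not_lt.2 hx)).symm
  refine ⟨F.measure, F.isProbabilityMeasure hF_bot hF_top, ?_, fun x hx => ?_⟩
  · rw [F.measure_Iic hF_bot]
    simp [F, ha]
  · rw [F.measure_Ioi hF_top]
    simp [F, not_lt.2 hx]

theorem exists_isProbabilityMeasure_tail_eq_inv_sq_mul_log_sq :
    ∃ ν : Measure ℝ, IsProbabilityMeasure ν ∧ ν (Iic 0) = 0 ∧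
      ∀ x : ℝ, 2 ≤ x → (ν (Ioi x)).toReal = 1 / (x ^ 2 * log x ^ 2) := by
  have hpos {x : ℝ} (hx : 2 ≤ x) : 0 < x ^ 2 * log x ^ 2 := by
    have hlog : 0 < log x := log_pos (by linarith)
    positivity
  have hanti : AntitoneOn (fun x : ℝ => 1 / (x ^ 2 * log x ^ 2)) (Ici 2) :=
    fun x (hx : 2 ≤ x) _ _ hxy => by
      have hlog : 0 ≤ log x := log_nonneg (by linarith)
      dsimp only
      gcongr
      exact hpos hx
  have hcont : ContinuousOn (fun x : ℝ => 1 / (x ^ 2 * log x ^ 2)) (Ici 2) := by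
    refine continuousOn_const.div ?_ fun x hx => (hpos hx).ne'
    exact (continuousOn_pow 2).mul ((continuousOn_log.mono fun x (hx : 2 ≤ x) => by
      simp only [mem_compl_iff, mem_singleton_iff]; linarith).pow 2)
  have hle : 1 / ((2 : ℝ) ^ 2 * log 2 ^ 2) ≤ 1 := by
    rw [div_le_one (hpos le_rfl)]
    nlinarith [log_two_gt_d9]
  have hlim : Tendsto (fun x : ℝ => 1 / (x ^ 2 * log x ^ 2)) atTop (𝓝 0) := by
    simp_rw [one_div]
    exact tendsto_inv_atTop_zero.comp <| (tendsto_pow_atTop two_ne_zero).atTop_mul_atTop₀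
      ((tendsto_pow_atTop two_ne_zero).comp tendsto_log_atTop)
  obtain ⟨ν, hν, hν0, htail⟩ :=
    exists_isProbabilityMeasure_measure_Ioi_eq two_pos hanti hcont hle hlim
  exact ⟨ν, hν, hν0, fun x hx => by rw [htail x hx, ENNReal.toReal_ofReal (by positivity)]⟩

/-- the moment condition `∫ x²|log x|^{1-ε} ν(dx) < ∞` for all
`ε ∈ (0,1)` does not suffice for finiteness of the square-root tail integral;
a tail `x⁻²(log x)⁻²` gives a counterexample. -/
theorem moment_condition_not_sufficient :
    (∃ ν : Measure ℝ, IsProbabilityMeasure ν ∧ ν (Iic 0) = 0 ∧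
      (∀ ε ∈ Ioo (0:ℝ) 1,
        (∫⁻ x in Ioi (0:ℝ), ENNReal.ofReal (x ^ 2 * |Real.log x| ^ (1 - ε)) ∂ν) < ⊤) ∧
      (∫⁻ x in Ioi (0:ℝ), ENNReal.ofReal (Real.sqrt ((ν (Ioi x)).toReal))) = ⊤) ∧
    (∀ ν : Measure ℝ, IsProbabilityMeasure ν → ν (Iic 0) = 0 →
      (∀ x : ℝ, 2 ≤ x → (ν (Ioi x)).toReal = 1 / (x ^ 2 * (Real.log x) ^ 2)) →
      (∀ ε ∈ Ioo (0:ℝ) 1,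
        (∫⁻ x in Ioi (0:ℝ), ENNReal.ofReal (x ^ 2 * |Real.log x| ^ (1 - ε)) ∂ν) < ⊤) ∧
      (∫⁻ x in Ioi (0:ℝ), ENNReal.ofReal (Real.sqrt ((ν (Ioi x)).toReal))) = ⊤) := by
  have key (ν : Measure ℝ) [IsProbabilityMeasure ν]
      (htail : ∀ x : ℝ, 2 ≤ x → (ν (Ioi x)).toReal = 1 / (x ^ 2 * log x ^ 2)) :
      (∀ ε ∈ Ioo (0:ℝ) 1,
        ∫⁻ x in Ioi 0, ENNReal.ofReal (x ^ 2 * |log x| ^ (1 - ε)) ∂ν < ⊤) ∧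
      ∫⁻ x in Ioi 0, ENNReal.ofReal (√(ν (Ioi x)).toReal) = ⊤ :=
    ⟨fun ε hε => lintegral_sq_mul_abs_log_rpow_lt_top ν (by linarith [hε.2]) (by linarith [hε.1])
      htail, lintegral_sqrt_tail_eq_top ν htail⟩
  obtain ⟨ν, hν, hν0, htail⟩ := exists_isProbabilityMeasure_tail_eq_inv_sq_mul_log_sq
  exact ⟨⟨ν, hν, hν0, key ν htail⟩, fun ν _ _ htail => key ν htail⟩
end DiffusiveSearch
end
end

section
/- Let p ∈ (0,1) and let I₊, I₋ > 0. Then positive real numbers k₁, k₂ satisfy the four equations exp(-k₁·I₊) = k₂/(k₁+k₂), exp(-k₂·I₋) = k₁/(k₁+k₂), (1-p)/p = (k₂²/k₁²)·(exp(k₁·I₊) − 1), and p/(1-p) = (k₁²/k₂²)·(exp(k₂·I₋) − 1) if and only if I₊/I₋ = ((1-p)·log(1-p))/(p·log p), k₁ = |log(1-p)|/I₊, and k₂ = |log p|/I₋. In particular, in this case k₁/(k₁+k₂) = p and k₂/(k₁+k₂) = 1-p. -/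
/-!
Write `q = k₁/(k₁+k₂)`, so that `k₂/(k₁+k₂) = 1 - q` and `k₂/k₁ = (1-q)/q`. The first equation
says `k₁I₊ = -log(1-q)`, i.e. `exp(k₁I₊) = 1/(1-q)`, and then the third collapses to
`(1-p)/p = (1-q)/q`, i.e. `q = p`; the second and fourth equations are the mirror image under
`(k₁, I₊, p) ↔ (k₂, I₋, 1-p)`. Once `k₁I₊ = -log(1-p)` and `k₂I₋ = -log p`, the balance ratio
`I₊/I₋` is equivalent to `k₂/k₁ = (1-p)/p`, i.e. again to `q = p`.
-/

open MeasureTheory Set Real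
open scoped ENNReal

noncomputable section

namespace DiffusiveSearch

def MatchingSystem (p Iplus Iminus k1 k2 : ℝ) : Prop :=
  Real.exp (-(k1 * Iplus)) = k2 / (k1 + k2) ∧
    Real.exp (-(k2 * Iminus)) = k1 / (k1 + k2) ∧
    (1 - p) / p = (k2 ^ 2 / k1 ^ 2) * (Real.exp (k1 * Iplus) - 1) ∧
    p / (1 - p) = (k1 ^ 2 / k2 ^ 2) * (Real.exp (k2 * Iminus) - 1)

lemma exp_neg_eq_iff_eq_neg_log {x y : ℝ} (hy : 0 < y) : Real.exp (-x) = y ↔ x = -Real.log y := by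
  rw [← Real.exp_log hy, Real.exp_eq_exp, Real.log_exp, neg_eq_iff_eq_neg]

lemma div_add_eq_one_sub_div {a b : ℝ} (h : a + b ≠ 0) : b / (a + b) = 1 - a / (a + b) := by
  rw [one_sub_div h, add_sub_cancel_left]

lemma one_sub_div_eq_one_sub_div_iff {p q : ℝ} (hp : p ≠ 0) (hq : q ≠ 0) :
    (1 - p) / p = (1 - q) / q ↔ q = p := by
  rw [div_eq_div_iff hp hq]
  constructor <;> intro h <;> linarith

-- Half of the matching system with `q = k₁/(k₁+k₂)`; for `(k₂, I₋, 1 - p)` it is the other half.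
lemma exp_and_balance_iff {p q x : ℝ} (hp : 0 < p) (hq : 0 < q) (hq1 : q < 1) :
    (Real.exp (-x) = 1 - q ∧ (1 - p) / p = ((1 - q) / q) ^ 2 * (Real.exp x - 1)) ↔
      (q = p ∧ x = -Real.log (1 - p)) := by
  have hq' : 1 - q ≠ 0 := by linarith
  have hbalance (hexp : Real.exp x = (1 - q)⁻¹) :
      ((1 - q) / q) ^ 2 * (Real.exp x - 1) = (1 - q) / q := by
    rw [hexp]; field_simp; ring
  constructor
  · rintro ⟨hexp, hbal⟩
    have hexp' : Real.exp x = (1 - q)⁻¹ := by rw [← hexp, Real.exp_neg, inv_inv]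
    have hqp : q = p :=
      (one_sub_div_eq_one_sub_div_iff hp.ne' hq.ne').1 (hbal.trans (hbalance hexp'))
    subst hqp
    exact ⟨rfl, (exp_neg_eq_iff_eq_neg_log (by linarith)).1 hexp⟩
  · rintro ⟨rfl, rfl⟩
    refine ⟨by rw [neg_neg, Real.exp_log (by linarith)], (hbalance ?_).symm⟩
    rw [Real.exp_neg, Real.exp_log (by linarith)]

lemma matchingSystem_iff {p Iplus Iminus k1 k2 : ℝ} (hp : 0 < p) (hp1 : p < 1)
    (hk1 : 0 < k1) (hk2 : 0 < k2) :
    MatchingSystem p Iplus Iminus k1 k2 ↔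
      k1 / (k1 + k2) = p ∧ k1 * Iplus = -Real.log (1 - p) ∧ k2 * Iminus = -Real.log p := by
  have hs : 0 < k1 + k2 := by linarith
  have hk2q : k2 / (k1 + k2) = 1 - k1 / (k1 + k2) := div_add_eq_one_sub_div hs.ne'
  have hk1q : k1 / (k1 + k2) = 1 - k2 / (k1 + k2) := by
    rw [add_comm]; exact div_add_eq_one_sub_div (by linarith)
  have hr1 : k2 ^ 2 / k1 ^ 2 = ((1 - k1 / (k1 + k2)) / (k1 / (k1 + k2))) ^ 2 := by
    field_simp; ring
  have hr2 : k1 ^ 2 / k2 ^ 2 = ((1 - k2 / (k1 + k2)) / (k2 / (k1 + k2))) ^ 2 := by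
    field_simp; ring
  have hk1q_pos : 0 < k1 / (k1 + k2) := div_pos hk1 hs
  have hk2q_pos : 0 < k2 / (k1 + k2) := div_pos hk2 hs
  have side1 := exp_and_balance_iff (x := k1 * Iplus) hp hk1q_pos (by linarith)
  have side2 := exp_and_balance_iff (x := k2 * Iminus) (p := 1 - p) (by linarith)
    hk2q_pos (by linarith)
  rw [sub_sub_cancel] at side2
  rw [← hr1, ← hk2q] at side1
  rw [← hr2, ← hk1q] at side2
  unfold MatchingSystem
  constructor
  · rintro ⟨e1, e2, e3, e4⟩
    exact ⟨(side1.1 ⟨e1, e3⟩).1, (side1.1 ⟨e1, e3⟩).2, (side2.1 ⟨e2, e4⟩).2⟩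
  · rintro ⟨hq, h1, h2⟩
    have hq' : k2 / (k1 + k2) = 1 - p := by rw [hk2q, hq]
    exact ⟨(side1.2 ⟨hq, h1⟩).1, (side2.2 ⟨hq', h2⟩).1, (side1.2 ⟨hq, h1⟩).2,
      (side2.2 ⟨hq', h2⟩).2⟩

lemma balance_ratio_iff {p Iplus Iminus k1 k2 : ℝ} (hp : 0 < p) (hp1 : p < 1)
    (hIp : 0 < Iplus) (hIm : 0 < Iminus) (hk1 : 0 < k1) (hk2 : 0 < k2)
    (h1 : k1 * Iplus = -Real.log (1 - p)) (h2 : k2 * Iminus = -Real.log p) :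
    Iplus / Iminus = ((1 - p) * Real.log (1 - p)) / (p * Real.log p) ↔ k1 / (k1 + k2) = p := by
  have hlog : p * Real.log p ≠ 0 := mul_ne_zero hp.ne' (Real.log_neg hp hp1).ne
  rw [div_eq_div_iff hIm.ne' hlog, div_eq_iff (by linarith), ← neg_eq_iff_eq_neg.2 h1,
    ← neg_eq_iff_eq_neg.2 h2]
  constructor
  · intro h
    have hI : Iplus * Iminus ≠ 0 := (mul_pos hIp hIm).ne'
    have := mul_left_cancel₀ hI (show Iplus * Iminus * (k1 * (1 - p)) = Iplus * Iminus * (p * k2) by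
      linear_combination h)
    linarith
  · intro h
    linear_combination (Iplus * Iminus) * h

/-- the matching system for `k₁, k₂` is solvable iff the square
root balance condition holds, with the explicit solution; in that case
`k₁/(k₁+k₂) = p` and `k₂/(k₁+k₂) = 1-p`. -/
theorem matching_conditions
    (p Iplus Iminus k1 k2 : ℝ) (hp : 0 < p) (hp1 : p < 1)
    (hIp : 0 < Iplus) (hIm : 0 < Iminus) (hk1 : 0 < k1) (hk2 : 0 < k2) :
    ((Real.exp (-(k1 * Iplus)) = k2 / (k1 + k2) ∧
      Real.exp (-(k2 * Iminus)) = k1 / (k1 + k2) ∧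
      (1 - p) / p = (k2 ^ 2 / k1 ^ 2) * (Real.exp (k1 * Iplus) - 1) ∧
      p / (1 - p) = (k1 ^ 2 / k2 ^ 2) * (Real.exp (k2 * Iminus) - 1)) ↔
      (Iplus / Iminus = ((1 - p) * Real.log (1 - p)) / (p * Real.log p) ∧
        k1 = |Real.log (1 - p)| / Iplus ∧ k2 = |Real.log p| / Iminus)) ∧
    ((Real.exp (-(k1 * Iplus)) = k2 / (k1 + k2) ∧
      Real.exp (-(k2 * Iminus)) = k1 / (k1 + k2) ∧
      (1 - p) / p = (k2 ^ 2 / k1 ^ 2) * (Real.exp (k1 * Iplus) - 1) ∧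
      p / (1 - p) = (k1 ^ 2 / k2 ^ 2) * (Real.exp (k2 * Iminus) - 1)) →
      k1 / (k1 + k2) = p ∧ k2 / (k1 + k2) = 1 - p) := by
  have habs1 : |Real.log (1 - p)| = -Real.log (1 - p) :=
    abs_of_neg (Real.log_neg (by linarith) (by linarith))
  have habs : |Real.log p| = -Real.log p := abs_of_neg (Real.log_neg hp hp1)
  have hsystem := matchingSystem_iff (Iplus := Iplus) (Iminus := Iminus) hp hp1 hk1 hk2
  refine ⟨hsystem.trans ?_, fun h => ?_⟩
  · rw [habs1, habs, eq_div_iff hIp.ne', eq_div_iff hIm.ne']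
    constructor
    · rintro ⟨hq, h1, h2⟩
      exact ⟨(balance_ratio_iff hp hp1 hIp hIm hk1 hk2 h1 h2).2 hq, h1, h2⟩
    · rintro ⟨hr, h1, h2⟩
      exact ⟨(balance_ratio_iff hp hp1 hIp hIm hk1 hk2 h1 h2).1 hr, h1, h2⟩
  · have hq := (hsystem.1 h).1
    refine ⟨hq, ?_⟩
    rw [← hq, div_add_eq_one_sub_div (by linarith)]
end DiffusiveSearch
end
end
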